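/- Let Σ be a finite connected multigraph. For every function φ : V → ℝ, one has max_{v∈V} φ(v) − min_{v∈V} φ(v) ≤ M(Δ(φ)) · diam(Σ). -/
import Mathlib


/-- The Laplacian of a function `φ : V → ℝ` on the multigraph with
edge-multiplicity function `m`: `Δ(φ)(v) = ∑_w m(v,w)·(φ(v) − φ(w))`. -/
noncomputable def lap {V : Type*} [Fintype V] (m : V → V → ℕ) (φ : V → ℝ) (v : V) : ℝ :=
  ∑ w, (m v w : ℝ) * (φ v - φ w)

/-- `M(f) = max_{S ⊆ V} |∑_{v∈S} f(v)|`. -/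
noncomputable def Mmax {V : Type*} [Fintype V] (f : V → ℝ) : ℝ :=
  (Finset.univ : Finset V).powerset.sup'
    ⟨∅, Finset.empty_mem_powerset _⟩ (fun S => |∑ v ∈ S, f v|)

lemma Mmax_nonneg {V : Type*} [Fintype V] (f : V → ℝ) : 0 ≤ Mmax f := by
  have := Finset.le_sup' (fun S : Finset V => |∑ v ∈ S, f v|)
    (Finset.empty_mem_powerset (Finset.univ : Finset V))
  simpa [Mmax] using this

lemma le_Mmax {V : Type*} [Fintype V] (f : V → ℝ) (S : Finset V) :
    ∑ v ∈ S, f v ≤ Mmax f :=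
  le_trans (le_abs_self _)
    (Finset.le_sup' (fun S : Finset V => |∑ v ∈ S, f v|) (Finset.mem_powerset.2 S.subset_univ))

lemma sum_lap_cut {V : Type*} [Fintype V] [DecidableEq V] (m : V → V → ℕ) (hm : ∀ v w, m v w = m w v)
    (φ : V → ℝ) (S : Finset V) :
    ∑ v ∈ S, lap m φ v = ∑ v ∈ S, ∑ w ∈ Sᶜ, (m v w : ℝ) * (φ v - φ w) := by
  have hsplit : ∀ v, lap m φ v =
      (∑ w ∈ S, (m v w : ℝ) * (φ v - φ w)) + ∑ w ∈ Sᶜ, (m v w : ℝ) * (φ v - φ w) := by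
    intro v
    rw [lap, ← Finset.sum_add_sum_compl S]
  have hzero : ∑ v ∈ S, ∑ w ∈ S, (m v w : ℝ) * (φ v - φ w) = 0 := by
    have h2 : ∑ v ∈ S, ∑ w ∈ S, (m v w : ℝ) * (φ v - φ w)
        = ∑ v ∈ S, ∑ w ∈ S, (m w v : ℝ) * (φ w - φ v) := Finset.sum_comm
    have h3 : ∑ v ∈ S, ∑ w ∈ S, (m w v : ℝ) * (φ w - φ v)
        = -∑ v ∈ S, ∑ w ∈ S, (m v w : ℝ) * (φ v - φ w) := by
      rw [← Finset.sum_neg_distrib]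
      refine Finset.sum_congr rfl fun v _ => ?_
      rw [← Finset.sum_neg_distrib]
      refine Finset.sum_congr rfl fun w _ => ?_
      rw [hm v w]; ring
    linarith [h2, h3]
  simp only [hsplit, Finset.sum_add_distrib, hzero, zero_add]

lemma adj_sub_le {V : Type*} [Fintype V] (m : V → V → ℕ) (hm : ∀ v w, m v w = m w v)
    (φ : V → ℝ) {x y : V} (hxy : 0 < m x y) :
    φ x - φ y ≤ Mmax (lap m φ) := by
  classical
  by_cases hle : φ x ≤ φ y
  · linarith [Mmax_nonneg (lap m φ)]
  push_neg at hle
  set S : Finset V := Finset.univ.filter (fun w => φ x ≤ φ w) with hS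
  have hxS : x ∈ S := by simp [hS]
  have hyS : y ∈ Sᶜ := by simp [hS]; linarith
  have key : φ x - φ y ≤ ∑ v ∈ S, ∑ w ∈ Sᶜ, (m v w : ℝ) * (φ v - φ w) := by
    have hterm : ∀ v ∈ S, ∀ w ∈ Sᶜ, (0:ℝ) ≤ (m v w : ℝ) * (φ v - φ w) := by
      intro v hv w hw
      simp [hS] at hv hw
      have : φ w < φ x := hw
      have : φ x ≤ φ v := hv
      have : (0:ℝ) ≤ φ v - φ w := by linarith
      positivity
    have hx : φ x - φ y ≤ ∑ w ∈ Sᶜ, (m x w : ℝ) * (φ x - φ w) := by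
      have h1 : φ x - φ y ≤ (m x y : ℝ) * (φ x - φ y) := by
        have h1m : (1:ℝ) ≤ (m x y : ℝ) := by exact_mod_cast hxy
        nlinarith
      calc φ x - φ y ≤ (m x y : ℝ) * (φ x - φ y) := h1
        _ ≤ ∑ w ∈ Sᶜ, (m x w : ℝ) * (φ x - φ w) :=
          Finset.single_le_sum (fun w hw => hterm x hxS w hw) hyS
    calc φ x - φ y ≤ ∑ w ∈ Sᶜ, (m x w : ℝ) * (φ x - φ w) := hx
      _ ≤ ∑ v ∈ S, ∑ w ∈ Sᶜ, (m v w : ℝ) * (φ v - φ w) :=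
        Finset.single_le_sum (fun v hv => Finset.sum_nonneg (hterm v hv)) hxS
  calc φ x - φ y ≤ ∑ v ∈ S, ∑ w ∈ Sᶜ, (m v w : ℝ) * (φ v - φ w) := key
    _ = ∑ v ∈ S, lap m φ v := (sum_lap_cut m hm φ S).symm
    _ ≤ Mmax (lap m φ) := le_Mmax _ _

lemma walk_sub_le {V : Type*} [Fintype V] (m : V → V → ℕ) (hm : ∀ v w, m v w = m w v)
    (G : SimpleGraph V) (hG : ∀ v w, G.Adj v w ↔ v ≠ w ∧ 0 < m v w)
    (φ : V → ℝ) {x y : V} (p : G.Walk x y) :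
    φ x - φ y ≤ (p.length : ℝ) * Mmax (lap m φ) := by
  induction p with
  | nil => simp
  | cons h p ih =>
    rename_i u v w
    have hadj := ((hG u v).1 h).2
    have h1 : φ u - φ v ≤ Mmax (lap m φ) := adj_sub_le m hm φ hadj
    simp only [SimpleGraph.Walk.length_cons, Nat.cast_add, Nat.cast_one]
    nlinarith [ih]

/-- If the underlying simple graph `G` of the multigraph (adjacency: `v ≠ w` and
`m(v,w) > 0`) is connected, then for every `φ : V → ℝ` one has
`max φ − min φ ≤ M(Δ(φ)) · diam(Σ)`. -/
theorem max_sub_min_le_Mmax_mul_diam {V : Type*} [Fintype V] [Nonempty V]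
    (m : V → V → ℕ) (hm : ∀ v w, m v w = m w v)
    (G : SimpleGraph V) (hG : ∀ v w, G.Adj v w ↔ v ≠ w ∧ 0 < m v w)
    (hconn : G.Connected) (φ : V → ℝ) :
    Finset.univ.sup' Finset.univ_nonempty φ - Finset.univ.inf' Finset.univ_nonempty φ ≤
      Mmax (lap m φ) * (G.diam : ℝ) := by
  obtain ⟨u, -, hu⟩ := Finset.exists_mem_eq_sup' Finset.univ_nonempty φ
  obtain ⟨v, -, hv⟩ := Finset.exists_mem_eq_inf' Finset.univ_nonempty φ
  obtain ⟨p, hp⟩ := (hconn.preconnected u v).exists_walk_length_eq_dist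
  have hediam : G.ediam ≠ ⊤ := by
    obtain ⟨a, b, hab⟩ := SimpleGraph.exists_edist_eq_ediam_of_finite (G := G)
    rw [← hab]
    obtain ⟨q⟩ := hconn.preconnected a b
    exact ne_top_of_le_ne_top (WithTop.natCast_ne_top q.length) (SimpleGraph.edist_le q)
  have hdist : G.dist u v ≤ G.diam := SimpleGraph.dist_le_diam hediam
  have hM : 0 ≤ Mmax (lap m φ) := Mmax_nonneg _
  have h1 : φ u - φ v ≤ (p.length : ℝ) * Mmax (lap m φ) := walk_sub_le m hm G hG φ p
  have h2 : (p.length : ℝ) ≤ (G.diam : ℝ) := by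
    rw [hp]; exact_mod_cast hdist
  rw [hu, hv]
  calc φ u - φ v ≤ (p.length : ℝ) * Mmax (lap m φ) := h1
    _ ≤ (G.diam : ℝ) * Mmax (lap m φ) := by nlinarith
    _ = Mmax (lap m φ) * (G.diam : ℝ) := mul_comm _ _
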